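/- Let p be a prime and n ≥ 1. Set G' = { [[a,b],[c,d]] ∈ GL_2(Z/p^{n+1}Z) : a ≡ 1 and c ≡ 0 (mod p^n) } and Γ = { [[1,x],[0,y]] ∈ GL_2(Z/p^{n+1}Z) }. Then for every subgroup G ≤ G', the index [G : G ∩ Γ] divides p^2 or divides p(p-1). -/

import Mathlib

/-!
Let `I = p^n R` in `R = ℤ/p^{n+1}ℤ`, so that `|I| = p` and `I` is killed by `pR ⊇ I`. With `B`
the upper triangular subgroup, `[G : G ∩ Γ] = [G ∩ B : G ∩ Γ] [G : G ∩ B]`. On `G ∩ B` the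
entry `a` is a homomorphism to `1 + I ≅ I` with kernel `G ∩ Γ`, so the first factor divides `p`.
For the second, `G` acts on `I` by `t ↦ c + d t` and `G ∩ B` is the stabilizer of `0`. If some
`g ∈ G` has `c ≠ 0` and `d ≡ 1 (mod p)`, it translates `I` by `c`, so the orbit of `0` is all
of `I` and the index is `p`; otherwise `g ↦ d mod p` is a homomorphism to `(ℤ/pℤ)ˣ` whose
kernel lies in `B`, and the index divides `p - 1`.
-/

open Matrix

namespace ZMod

theorem ker_castHom {N m : ℕ} (hd : m ∣ N) :
    RingHom.ker (castHom hd (ZMod m)) = Ideal.span {(m : ZMod N)} := by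
  ext x
  rw [RingHom.mem_ker, Ideal.mem_span_singleton]
  constructor
  · intro hx
    have : ((x.cast : ℤ) : ZMod m) = 0 := by
      rw [← hx, ← map_intCast (castHom hd (ZMod m)), intCast_zmod_cast]
    obtain ⟨k, hk⟩ := (intCast_zmod_eq_zero_iff_dvd _ _).mp this
    exact ⟨k, by rw [← intCast_zmod_cast x, hk, Int.cast_mul, Int.cast_natCast]⟩
  · rintro ⟨y, rfl⟩
    rw [map_mul, map_natCast, natCast_self, zero_mul]

theorem card_ker_castHom_mul {N m : ℕ} [NeZero N] (hd : m ∣ N) :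
    Nat.card (RingHom.ker (castHom hd (ZMod m))) * m = N := by
  have hrange : (castHom hd (ZMod m)).toAddMonoidHom.range = ⊤ :=
    AddMonoidHom.range_eq_top.mpr (castHom_surjective hd)
  have := (castHom hd (ZMod m)).toAddMonoidHom.ker.card_mul_index
  rwa [AddSubgroup.index_ker, hrange, AddSubgroup.card_top, Nat.card_zmod, Nat.card_zmod] at this

theorem ker_castHom_mul_ker_castHom {N a b : ℕ} (ha : a ∣ N) (hb : b ∣ N) (hN : N ∣ a * b) :
    RingHom.ker (castHom ha (ZMod a)) * RingHom.ker (castHom hb (ZMod b)) = ⊥ := by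
  rw [ker_castHom, ker_castHom, Ideal.span_singleton_mul_span_singleton, ← Nat.cast_mul,
    (natCast_eq_zero_iff _ _).mpr hN, Ideal.span_singleton_eq_bot]

theorem ker_castHom_le_ker_castHom {N a b : ℕ} (ha : a ∣ N) (hb : b ∣ N) (hba : b ∣ a) :
    RingHom.ker (castHom ha (ZMod a)) ≤ RingHom.ker (castHom hb (ZMod b)) := by
  rw [ker_castHom, ker_castHom, Ideal.span_singleton_le_span_singleton]
  exact Nat.cast_dvd_cast hba

end ZMod

namespace GL2

variable (R : Type*) [CommRing R]

def upperTriangular : Subgroup (GL (Fin 2) R) where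
  carrier := {g | (g : Matrix (Fin 2) (Fin 2) R) 1 0 = 0}
  one_mem' := one_apply_ne (by decide)
  mul_mem' {g h} hg hh := by
    simp_all [Units.val_mul, mul_apply, Fin.sum_univ_two]
  inv_mem' {g} hg := by
    simp_all [coe_units_inv, inv_def, adjugate_fin_two]

def stabilizerFirstBasisVector : Subgroup (GL (Fin 2) R) where
  carrier := {g | (g : Matrix (Fin 2) (Fin 2) R) 0 0 = 1 ∧ (g : Matrix (Fin 2) (Fin 2) R) 1 0 = 0}
  one_mem' := ⟨one_apply_eq _, one_apply_ne (by decide)⟩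
  mul_mem' {g h} hg hh := by
    simp_all [Units.val_mul, mul_apply, Fin.sum_univ_two]
  inv_mem' {g} hg := by
    have h10 : g⁻¹ ∈ upperTriangular R := inv_mem (show g ∈ upperTriangular R from hg.2)
    have h00 : ((g⁻¹ * g : GL (Fin 2) R) : Matrix (Fin 2) (Fin 2) R) 0 0 = 1 := by
      rw [inv_mul_cancel, Units.val_one, one_apply_eq]
    simp only [Units.val_mul, mul_apply, Fin.sum_univ_two, hg.1, hg.2, mul_one, mul_zero,
      add_zero] at h00
    exact ⟨h00, h10⟩

theorem stabilizerFirstBasisVector_le_upperTriangular :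
    stabilizerFirstBasisVector R ≤ upperTriangular R :=
  fun _ hg => hg.2

variable {R} {I : Ideal R}

def topLeftHom (hI : I * I = ⊥) {H : Subgroup (GL (Fin 2) R)} (hHU : H ≤ upperTriangular R)
    (hH : ∀ h ∈ H, (h : GL (Fin 2) R) 0 0 - 1 ∈ I) : H →* Multiplicative I where
  toFun h := .ofAdd ⟨(h : GL (Fin 2) R) 0 0 - 1, hH h h.2⟩
  map_one' := by
    rw [ofAdd_eq_one, Subtype.ext_iff]
    exact sub_eq_zero.mpr (one_apply_eq _)
  map_mul' g h := by
    rw [← ofAdd_add]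
    congr 1
    ext
    have h10 : (h : GL (Fin 2) R) 1 0 = 0 := hHU h.2
    have hgh : ((h : GL (Fin 2) R) 0 0 - 1) * ((g : GL (Fin 2) R) 0 0 - 1) = 0 := by
      simpa [hI] using Ideal.mul_mem_mul (hH h h.2) (hH g g.2)
    simp only [Subgroup.coe_mul, Units.val_mul, mul_apply, Fin.sum_univ_two, h10, mul_zero,
      add_zero, AddMemClass.coe_add]
    linear_combination hgh

theorem relIndex_stabilizerFirstBasisVector_dvd_card (hI : I * I = ⊥)
    {H : Subgroup (GL (Fin 2) R)} (hHU : H ≤ upperTriangular R)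
    (hH : ∀ h ∈ H, (h : GL (Fin 2) R) 0 0 - 1 ∈ I) :
    (stabilizerFirstBasisVector R).relIndex H ∣ Nat.card I := by
  have hker : (topLeftHom hI hHU hH).ker = (stabilizerFirstBasisVector R).subgroupOf H := by
    ext h
    have h10 : (h : GL (Fin 2) R) 1 0 = 0 := hHU h.2
    simp [topLeftHom, Subgroup.mem_subgroupOf, stabilizerFirstBasisVector, sub_eq_zero, h10]
  rw [Subgroup.relIndex, ← hker, Subgroup.index_ker, ← Nat.card_congr Multiplicative.toAdd]
  exact Subgroup.card_subgroup_dvd_card _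

/-- The Möbius action `t ↦ (c + d t) / (a + b t)` of `[[a, b], [c, d]]` on `I`: the denominator
lies in `1 + I`, which acts trivially on `I`. -/
abbrev affineAction (hI : I * I = ⊥) {G : Subgroup (GL (Fin 2) R)}
    (hG : ∀ g ∈ G, (g : GL (Fin 2) R) 0 0 - 1 ∈ I ∧ (g : GL (Fin 2) R) 1 0 ∈ I) :
    MulAction G I where
  smul g t := ⟨(g : GL (Fin 2) R) 1 0 + (g : GL (Fin 2) R) 1 1 * t,
    I.add_mem (hG g g.2).2 (I.mul_mem_left _ t.2)⟩
  one_smul t := by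
    ext
    change ((1 : GL (Fin 2) R) : Matrix (Fin 2) (Fin 2) R) 1 0 +
      ((1 : GL (Fin 2) R) : Matrix (Fin 2) (Fin 2) R) 1 1 * t = t
    simp
  mul_smul g h t := by
    ext
    change ((g * h : GL (Fin 2) R) : Matrix (Fin 2) (Fin 2) R) 1 0 +
        ((g * h : GL (Fin 2) R) : Matrix (Fin 2) (Fin 2) R) 1 1 * t =
      (g : GL (Fin 2) R) 1 0 +
        (g : GL (Fin 2) R) 1 1 * ((h : GL (Fin 2) R) 1 0 + (h : GL (Fin 2) R) 1 1 * t)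
    have e1 : (g : GL (Fin 2) R) 1 0 * ((h : GL (Fin 2) R) 0 0 - 1) = 0 := by
      simpa [hI] using Ideal.mul_mem_mul (hG g g.2).2 (hG h h.2).1
    have e2 : (g : GL (Fin 2) R) 1 0 * t = 0 := by
      simpa [hI] using Ideal.mul_mem_mul (hG g g.2).2 t.2
    simp only [Units.val_mul, mul_apply, Fin.sum_univ_two]
    linear_combination e1 + (h : GL (Fin 2) R) 0 1 * e2

theorem relIndex_upperTriangular_eq_ncard (hI : I * I = ⊥) {G : Subgroup (GL (Fin 2) R)}
    (hG : ∀ g ∈ G, (g : GL (Fin 2) R) 0 0 - 1 ∈ I ∧ (g : GL (Fin 2) R) 1 0 ∈ I) :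
    (upperTriangular R).relIndex G = (Set.range fun g : G => (g : GL (Fin 2) R) 1 0).ncard := by
  let := affineAction hI hG
  have hsmul (g : G) : ((g • (0 : I) : I) : R) = (g : GL (Fin 2) R) 1 0 := by
    change _ + _ * 0 = _
    rw [mul_zero, add_zero]
  have hstab : MulAction.stabilizer G (0 : I) = (upperTriangular R).subgroupOf G := by
    ext g
    rw [MulAction.mem_stabilizer_iff, Subgroup.mem_subgroupOf, Subtype.ext_iff, hsmul]
    rfl
  have horbit : Subtype.val '' MulAction.orbit G (0 : I) =
      Set.range fun g : G => (g : GL (Fin 2) R) 1 0 := by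
    rw [MulAction.orbit, ← Set.range_comp]
    exact congrArg Set.range (funext hsmul)
  rw [Subgroup.relIndex, ← hstab, MulAction.index_stabilizer, ← horbit,
    Set.ncard_image_of_injective _ Subtype.val_injective]

theorem relIndex_upperTriangular_eq_card (hI : I * I = ⊥) (hprime : (Nat.card I).Prime)
    {G : Subgroup (GL (Fin 2) R)}
    (hG : ∀ g ∈ G, (g : GL (Fin 2) R) 0 0 - 1 ∈ I ∧ (g : GL (Fin 2) R) 1 0 ∈ I)
    {g₀ : GL (Fin 2) R} (hg₀ : g₀ ∈ G) (hc : g₀ 1 0 ≠ 0) (hd : ∀ t ∈ I, g₀ 1 1 * t = t) :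
    (upperTriangular R).relIndex G = Nat.card I := by
  have hpow (k : ℕ) : (g₀ ^ k) 1 0 = k • g₀ 1 0 := by
    induction k with
    | zero => simp
    | succ k ih =>
      have hk := hG _ (pow_mem hg₀ k)
      have e : g₀ 1 0 * ((g₀ ^ k) 0 0 - 1) = 0 := by
        simpa [hI] using Ideal.mul_mem_mul (hG g₀ hg₀).2 hk.1
      rw [pow_succ', Units.val_mul, mul_apply, Fin.sum_univ_two, hd _ hk.2, ih, succ_nsmul']
      linear_combination e
  have hrange : (Set.range fun g : G => (g : GL (Fin 2) R) 1 0) = I := by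
    refine Set.Subset.antisymm ?_ ?_
    · rintro _ ⟨g, rfl⟩
      exact (hG g g.2).2
    · intro t ht
      have := Fact.mk hprime
      obtain ⟨k, hk⟩ := mem_multiples_of_prime_card (g := (⟨g₀ 1 0, (hG g₀ hg₀).2⟩ : I))
        (g' := ⟨t, ht⟩) rfl (by simpa [Subtype.ext_iff] using hc)
      exact ⟨⟨g₀ ^ k, pow_mem hg₀ k⟩, by simpa [hpow, Subtype.ext_iff] using hk⟩
  rw [relIndex_upperTriangular_eq_ncard hI hG, hrange]
  exact (Nat.card_coe_set_eq _).symm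

def bottomRightHom {S : Type*} [CommRing S] (π : R →+* S) {G : Subgroup (GL (Fin 2) R)}
    (hG : ∀ g ∈ G, π ((g : GL (Fin 2) R) 1 0) = 0) : G →* S where
  toFun g := π ((g : GL (Fin 2) R) 1 1)
  map_one' := by simp
  map_mul' g h := by
    simp [Units.val_mul, mul_apply, Fin.sum_univ_two, hG g g.2]

theorem relIndex_upperTriangular_dvd_card_units {S : Type*} [CommRing S] (π : R →+* S)
    {G : Subgroup (GL (Fin 2) R)} (hG : ∀ g ∈ G, π ((g : GL (Fin 2) R) 1 0) = 0)
    (hker : ∀ g ∈ G, π ((g : GL (Fin 2) R) 1 1) = 1 → (g : GL (Fin 2) R) 1 0 = 0) :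
    (upperTriangular R).relIndex G ∣ Nat.card Sˣ := by
  have hle : (bottomRightHom π hG).toHomUnits.ker ≤ (upperTriangular R).subgroupOf G :=
    fun g hg => hker g g.2 (congrArg Units.val hg)
  rw [Subgroup.relIndex]
  calc ((upperTriangular R).subgroupOf G).index ∣ (bottomRightHom π hG).toHomUnits.ker.index :=
        Subgroup.index_dvd_of_le hle
    _ = Nat.card (bottomRightHom π hG).toHomUnits.range := Subgroup.index_ker _
    _ ∣ Nat.card Sˣ := Subgroup.card_subgroup_dvd_card _

theorem relIndex_upperTriangular_dvd {S : Type*} [CommRing S] (π : R →+* S)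
    (hIπ : I ≤ RingHom.ker π) (hπI : RingHom.ker π * I = ⊥) (hprime : (Nat.card I).Prime)
    {G : Subgroup (GL (Fin 2) R)}
    (hG : ∀ g ∈ G, (g : GL (Fin 2) R) 0 0 - 1 ∈ I ∧ (g : GL (Fin 2) R) 1 0 ∈ I) :
    (upperTriangular R).relIndex G ∣ Nat.card I ∨
      (upperTriangular R).relIndex G ∣ Nat.card Sˣ := by
  have hI : I * I = ⊥ := le_bot_iff.mp (hπI ▸ Ideal.mul_mono_left hIπ)
  by_cases htrans : ∃ g ∈ G, (g : GL (Fin 2) R) 1 0 ≠ 0 ∧ π ((g : GL (Fin 2) R) 1 1) = 1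
  · obtain ⟨g₀, hg₀, hc, hd⟩ := htrans
    refine .inl (relIndex_upperTriangular_eq_card hI hprime hG hg₀ hc fun t ht => ?_).dvd
    have h : (g₀ 1 1 - 1) * t = 0 := by
      simpa [hπI] using Ideal.mul_mem_mul (show g₀ 1 1 - 1 ∈ RingHom.ker π by simp [hd]) ht
    linear_combination h
  · push Not at htrans
    exact .inr (relIndex_upperTriangular_dvd_card_units π (fun g hg => hIπ (hG g hg).2)
      fun g hg hd => not_not.mp fun hc => htrans g hg hc hd)

end GL2

/-- Let `p` be prime, `n ≥ 1`,
`G' = { [[a,b],[c,d]] ∈ GL₂(ℤ/p^{n+1}ℤ) : a ≡ 1, c ≡ 0 (mod p^n) }` and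
`Γ = { [[1,x],[0,y]] ∈ GL₂(ℤ/p^{n+1}ℤ) }`. For every subgroup `G ≤ G'`, the
index `[G : G ∩ Γ]` divides `p²` or divides `p(p-1)`. -/
theorem index_div_of_le_Gprime (p : ℕ) (hp : p.Prime) (n : ℕ) (hn : 1 ≤ n)
    (h : (p ^ n : ℕ) ∣ p ^ (n + 1))
    (Γ : Subgroup (GL (Fin 2) (ZMod (p ^ (n + 1)))))
    (hΓ : (Γ : Set (GL (Fin 2) (ZMod (p ^ (n + 1))))) =
      {g : GL (Fin 2) (ZMod (p ^ (n + 1))) |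
        (g : Matrix (Fin 2) (Fin 2) (ZMod (p ^ (n + 1)))) 0 0 = 1 ∧
        (g : Matrix (Fin 2) (Fin 2) (ZMod (p ^ (n + 1)))) 1 0 = 0})
    (G : Subgroup (GL (Fin 2) (ZMod (p ^ (n + 1)))))
    (hG : ∀ g ∈ G,
      ZMod.castHom h (ZMod (p ^ n)) ((g : Matrix (Fin 2) (Fin 2) (ZMod (p ^ (n + 1)))) 0 0) = 1 ∧
      ZMod.castHom h (ZMod (p ^ n)) ((g : Matrix (Fin 2) (Fin 2) (ZMod (p ^ (n + 1)))) 1 0) = 0) :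
    Γ.relIndex G ∣ p ^ 2 ∨ Γ.relIndex G ∣ p * (p - 1) := by
  have := Fact.mk hp
  obtain rfl : Γ = GL2.stabilizerFirstBasisVector _ := SetLike.coe_injective hΓ
  set I := RingHom.ker (ZMod.castHom h (ZMod (p ^ n)))
  have hcard : Nat.card I = p := Nat.eq_of_mul_eq_mul_right (pow_pos hp.pos n)
    ((ZMod.card_ker_castHom_mul h).trans (pow_succ' p n))
  have hI : I * I = ⊥ := ZMod.ker_castHom_mul_ker_castHom h h
    (by rw [← pow_add]; exact pow_dvd_pow p (by omega))
  have hGI : ∀ g ∈ G, (g : GL (Fin 2) _) 0 0 - 1 ∈ I ∧ (g : GL (Fin 2) _) 1 0 ∈ I := by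
    intro g hg
    rw [RingHom.mem_ker, RingHom.mem_ker, map_sub, map_one, (hG g hg).1, sub_self]
    exact ⟨rfl, (hG g hg).2⟩
  have hA : (GL2.stabilizerFirstBasisVector _).relIndex (GL2.upperTriangular _ ⊓ G) ∣ p :=
    (GL2.relIndex_stabilizerFirstBasisVector_dvd_card hI inf_le_left
      fun g hg => (hGI g (Subgroup.mem_inf.mp hg).2).1).trans hcard.dvd
  have hp1 : p ∣ p ^ (n + 1) := dvd_pow_self p n.succ_ne_zero
  have hB := GL2.relIndex_upperTriangular_dvd (ZMod.castHom hp1 (ZMod p))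
    (ZMod.ker_castHom_le_ker_castHom h hp1 (dvd_pow_self p (by omega)))
    (ZMod.ker_castHom_mul_ker_castHom hp1 h (pow_succ' p n).dvd) (by rwa [hcard]) hGI
  rw [hcard, Nat.card_eq_fintype_card, ZMod.card_units] at hB
  rw [← inf_of_le_left (GL2.stabilizerFirstBasisVector_le_upperTriangular _),
    ← Subgroup.relIndex_inf_mul_relIndex, sq]
  exact hB.imp (mul_dvd_mul hA) (mul_dvd_mul hA)
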